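/- Define, for θ > 0, z̃₂(θ) = 6(sinh 2θ − 2θ)²/(cosh 2θ − 1)³ and w̃₀(θ) = (sinh 2θ − 2θ)(sinh 2θ)/(cosh 2θ − 1)². Then lim_{θ→0⁺} (z̃₂(θ), w̃₀(θ)) = (4/3, 2/3) = SM₂ and lim_{θ→∞} (z̃₂(θ), w̃₀(θ)) = (0, 1) = M₂. That is, the leading-order trajectory of the pressureless k = −1 Friedmann spacetime connects the critical Friedmann rest point SM₂ (as t → 0) to the Minkowski rest point M₂ (as t → ∞). -/

import Mathlib

/-!
In the variable `u = 2θ` both coefficients are homogeneous ratios of `sinh u - u`, `sinh u`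
and `cosh u - 1`. Near `u = 0` these behave like `u³/6`, `u` and `u²/2`; dividing numerator and
denominator by the matching power of `u` gives the limits `(4/3, 2/3)`. For `u → ∞` all three
behave like `eᵘ/2`; dividing by the matching power of `eᵘ` leaves one spare factor `e⁻ᵘ` in the
density, so the limits are `(0, 1)`.
-/

open Real Set Filter

/-- Leading-order density coefficient of the pressureless `k = −1` Friedmann spacetime. -/
noncomputable def z2F (θ : ℝ) : ℝ :=
  6 * (Real.sinh (2 * θ) - 2 * θ) ^ 2 / (Real.cosh (2 * θ) - 1) ^ 3

/-- Leading-order velocity coefficient of the pressureless `k = −1` Friedmann spacetime. -/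
noncomputable def w0F (θ : ℝ) : ℝ :=
  (Real.sinh (2 * θ) - 2 * θ) * Real.sinh (2 * θ) / (Real.cosh (2 * θ) - 1) ^ 2

open Topology

lemma tendsto_sinh_div_self_nhdsNE_zero :
    Tendsto (fun u : ℝ => sinh u / u) (𝓝[≠] 0) (𝓝 1) := by
  have h := hasDerivAt_iff_tendsto_slope.mp (hasDerivAt_sinh 0)
  rw [cosh_zero] at h
  refine h.congr fun u => ?_
  simp [slope_def_field]

lemma tendsto_cosh_sub_one_div_sq_nhdsNE_zero :
    Tendsto (fun u : ℝ => (cosh u - 1) / u ^ 2) (𝓝[≠] 0) (𝓝 (1 / 2)) := by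
  refine HasDerivAt.lhopital_zero_nhdsNE (f' := sinh) (g' := fun u => 2 * u)
    (Eventually.of_forall fun u => by simpa using (hasDerivAt_cosh u).sub_const 1)
    (Eventually.of_forall fun u => by simpa using hasDerivAt_pow 2 u)
    ?_ ?_ ?_ ?_
  · filter_upwards [self_mem_nhdsWithin] with u (hu : u ≠ 0)
    positivity
  · exact (continuous_cosh.sub continuous_const).tendsto' 0 0 (by simp)
      |>.mono_left nhdsWithin_le_nhds
  · exact (continuous_pow 2).tendsto' 0 0 (by simp) |>.mono_left nhdsWithin_le_nhds
  · simpa [div_mul_eq_div_div_swap] using tendsto_sinh_div_self_nhdsNE_zero.div_const 2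

lemma tendsto_sinh_sub_self_div_cube_nhdsNE_zero :
    Tendsto (fun u : ℝ => (sinh u - u) / u ^ 3) (𝓝[≠] 0) (𝓝 (1 / 6)) := by
  refine HasDerivAt.lhopital_zero_nhdsNE (f' := fun u => cosh u - 1) (g' := fun u => 3 * u ^ 2)
    (Eventually.of_forall fun u => (hasDerivAt_sinh u).sub (hasDerivAt_id' u))
    (Eventually.of_forall fun u => by simpa using hasDerivAt_pow 3 u)
    ?_ ?_ ?_ ?_
  · filter_upwards [self_mem_nhdsWithin] with u (hu : u ≠ 0)
    positivity
  · exact (continuous_sinh.sub continuous_id).tendsto' 0 0 (by simp)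
      |>.mono_left nhdsWithin_le_nhds
  · exact (continuous_pow 3).tendsto' 0 0 (by simp) |>.mono_left nhdsWithin_le_nhds
  · convert tendsto_cosh_sub_one_div_sq_nhdsNE_zero.div_const 3 using 2 <;> ring

lemma cosh_sub_one_ne_zero {u : ℝ} (hu : u ≠ 0) : cosh u - 1 ≠ 0 :=
  (sub_pos.mpr (one_lt_cosh.mpr hu)).ne'

lemma tendsto_friedmann_density_nhdsNE_zero :
    Tendsto (fun u : ℝ => 6 * (sinh u - u) ^ 2 / (cosh u - 1) ^ 3) (𝓝[≠] 0) (𝓝 (4 / 3)) := by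
  have h := (tendsto_sinh_sub_self_div_cube_nhdsNE_zero.pow 2).const_mul 6 |>.div
    (tendsto_cosh_sub_one_div_sq_nhdsNE_zero.pow 3) (by norm_num)
  convert h.congr' ?_ using 2
  · norm_num
  filter_upwards [self_mem_nhdsWithin] with u (hu : u ≠ 0)
  have := cosh_sub_one_ne_zero hu
  simp only [Pi.div_apply]
  field_simp

lemma tendsto_friedmann_velocity_nhdsNE_zero :
    Tendsto (fun u : ℝ => (sinh u - u) * sinh u / (cosh u - 1) ^ 2) (𝓝[≠] 0) (𝓝 (2 / 3)) := by
  have h := (tendsto_sinh_sub_self_div_cube_nhdsNE_zero.mul tendsto_sinh_div_self_nhdsNE_zero).div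
    (tendsto_cosh_sub_one_div_sq_nhdsNE_zero.pow 2) (by norm_num)
  convert h.congr' ?_ using 2
  · norm_num
  filter_upwards [self_mem_nhdsWithin] with u (hu : u ≠ 0)
  have := cosh_sub_one_ne_zero hu
  simp only [Pi.div_apply]
  field_simp

lemma exp_mul_exp_neg_self (u : ℝ) : exp u * exp (-u) = 1 := by
  rw [← exp_add, add_neg_cancel, exp_zero]

lemma tendsto_sinh_mul_exp_neg_atTop :
    Tendsto (fun u : ℝ => sinh u * exp (-u)) atTop (𝓝 (1 / 2)) := by
  convert ((tendsto_exp_neg_atTop_nhds_zero.pow 2).const_sub 1).div_const 2 using 1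
  · funext u
    rw [sinh_eq]
    linear_combination exp_mul_exp_neg_self u / 2
  · norm_num

lemma tendsto_cosh_sub_one_mul_exp_neg_atTop :
    Tendsto (fun u : ℝ => (cosh u - 1) * exp (-u)) atTop (𝓝 (1 / 2)) := by
  have e := tendsto_exp_neg_atTop_nhds_zero
  convert (((e.pow 2).const_add 1).div_const 2).sub e using 1
  · funext u
    rw [cosh_eq]
    linear_combination exp_mul_exp_neg_self u / 2
  · norm_num

lemma tendsto_sinh_sub_self_mul_exp_neg_atTop :
    Tendsto (fun u : ℝ => (sinh u - u) * exp (-u)) atTop (𝓝 (1 / 2)) := by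
  convert tendsto_sinh_mul_exp_neg_atTop.sub
    (by simpa using tendsto_pow_mul_exp_neg_atTop_nhds_zero 1) using 1
  · funext u; ring
  · norm_num

lemma tendsto_friedmann_density_atTop :
    Tendsto (fun u : ℝ => 6 * (sinh u - u) ^ 2 / (cosh u - 1) ^ 3) atTop (𝓝 0) := by
  have h := ((tendsto_exp_neg_atTop_nhds_zero.const_mul 6).mul
    (tendsto_sinh_sub_self_mul_exp_neg_atTop.pow 2)).div
    (tendsto_cosh_sub_one_mul_exp_neg_atTop.pow 3) (by norm_num)
  convert h.congr' ?_ using 2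
  · norm_num
  filter_upwards [eventually_ne_atTop 0] with u hu
  have := cosh_sub_one_ne_zero hu
  simp only [Pi.div_apply]
  field_simp

lemma tendsto_friedmann_velocity_atTop :
    Tendsto (fun u : ℝ => (sinh u - u) * sinh u / (cosh u - 1) ^ 2) atTop (𝓝 1) := by
  have h := (tendsto_sinh_sub_self_mul_exp_neg_atTop.mul tendsto_sinh_mul_exp_neg_atTop).div
    (tendsto_cosh_sub_one_mul_exp_neg_atTop.pow 2) (by norm_num)
  convert h.congr' ?_ using 2
  · norm_num
  filter_upwards [eventually_ne_atTop 0] with u hu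
  have := cosh_sub_one_ne_zero hu
  simp only [Pi.div_apply]
  field_simp

theorem k_neg_orbit_connects_SM2_to_M2 :
    Tendsto (fun θ => (z2F θ, w0F θ)) (nhdsWithin 0 (Ioi 0))
      (nhds ((4 / 3 : ℝ), (2 / 3 : ℝ))) ∧
    Tendsto (fun θ => (z2F θ, w0F θ)) atTop (nhds ((0 : ℝ), (1 : ℝ))) := by
  have two_mul_nhdsGT : Tendsto (fun θ : ℝ => 2 * θ) (𝓝[>] 0) (𝓝[≠] 0) :=
    tendsto_nhdsWithin_of_tendsto_nhds_of_eventually_within _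
      ((continuous_const_mul 2).tendsto' 0 0 (mul_zero 2) |>.mono_left nhdsWithin_le_nhds)
      (by filter_upwards [self_mem_nhdsWithin] with θ (hθ : 0 < θ) using (mul_pos two_pos hθ).ne')
  have two_mul_atTop : Tendsto (fun θ : ℝ => 2 * θ) atTop atTop :=
    tendsto_id.const_mul_atTop two_pos
  exact ⟨(tendsto_friedmann_density_nhdsNE_zero.comp two_mul_nhdsGT).prodMk_nhds
      (tendsto_friedmann_velocity_nhdsNE_zero.comp two_mul_nhdsGT),
    (tendsto_friedmann_density_atTop.comp two_mul_atTop).prodMk_nhds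
      (tendsto_friedmann_velocity_atTop.comp two_mul_atTop)⟩
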